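/- The supremum over λ ∈ (0, ∞) of the precision α_λ = E_Q[min(1, λ p(x)/q(x))] equals Q(Supp(P)), where Supp(P) = {x : p(x) > 0}; that is, sup_λ α_λ = Q({x : p(x) > 0}). -/
import Mathlib


open scoped NNReal ENNReal
open MeasureTheory

/-- The supremum over `λ ∈ (0,∞)` of the precision `α_λ = E_Q[min(1, λ p/q)]`
equals `Q(Supp P) = Q {x | p x > 0}`. -/
theorem iSup_precision_eq_measure_support {X : Type*} [MeasurableSpace X]
    (μ : Measure X) [SigmaFinite μ] (P Q : Measure X)
    [IsProbabilityMeasure P] [IsProbabilityMeasure Q]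
    (p q : X → ℝ≥0∞) (hp : Measurable p) (hq : Measurable q)
    (hP : P = μ.withDensity p) (hQ : Q = μ.withDensity q) :
    ⨆ l ∈ Set.Ioi (0 : ℝ≥0), ∫⁻ x, min 1 ((l : ℝ≥0∞) * p x / q x) ∂Q
      = Q {x | 0 < p x} := by
  have hs : MeasurableSet {x | 0 < p x} := measurableSet_lt measurable_const hp
  have hqint : ∫⁻ x, q x ∂μ ≠ ∞ := by
    have : ∫⁻ x, q x ∂μ = Q Set.univ := by
      rw [hQ, withDensity_apply _ MeasurableSet.univ, setLIntegral_univ]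
    rw [this]; simp
  have hqfin : ∀ᵐ x ∂Q, q x < ∞ := by
    have h1 : ∀ᵐ x ∂μ, q x < ∞ := ae_lt_top hq hqint
    have hac : Q ≪ μ := hQ ▸ withDensity_absolutelyContinuous μ q
    exact hac.ae_le h1
  apply le_antisymm
  · refine iSup₂_le fun l hl => ?_
    calc ∫⁻ x, min 1 ((l : ℝ≥0∞) * p x / q x) ∂Q
        ≤ ∫⁻ x, Set.indicator {x | 0 < p x} (fun _ => (1:ℝ≥0∞)) x ∂Q := by
          refine lintegral_mono fun x => ?_
          by_cases hx : 0 < p x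
          · simp only [Set.indicator_apply, Set.mem_setOf_eq, if_pos hx]
            exact min_le_left _ _
          · have hp0 : p x = 0 := by simpa using not_lt.mp hx
            simp only [Set.indicator_apply, Set.mem_setOf_eq, if_neg hx]
            simp [hp0]
      _ = Q {x | 0 < p x} := by
          rw [lintegral_indicator hs]
          simp
  · have heq : ∀ᵐ x ∂Q, Set.indicator {x | 0 < p x} (fun _ => (1:ℝ≥0∞)) x
        = ⨆ n : ℕ, min 1 ((((n:ℝ≥0)+1 : ℝ≥0) : ℝ≥0∞) * p x / q x) := by
      filter_upwards [hqfin] with x hqx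
      by_cases hx : 0 < p x
      · simp only [Set.indicator_apply, Set.mem_setOf_eq, if_pos hx]
        refine le_antisymm ?_ (iSup_le fun n => min_le_left _ _)
        have hc : 0 < p x / q x := ENNReal.div_pos hx.ne' hqx.ne
        obtain ⟨n, hn⟩ := ENNReal.exists_nat_gt (ENNReal.inv_ne_top.mpr hc.ne')
        refine le_iSup_of_le n (le_min le_rfl ?_)
        have hassoc : (((n:ℝ≥0)+1 : ℝ≥0) : ℝ≥0∞) * p x / q x
            = (((n:ℝ≥0)+1 : ℝ≥0) : ℝ≥0∞) * (p x / q x) := by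
          rw [mul_div_assoc]
        rw [hassoc]
        by_cases htop : p x / q x = ∞
        · rw [htop]
          simp [ENNReal.mul_top]
        · have h1 : (1:ℝ≥0∞) = (p x / q x)⁻¹ * (p x / q x) :=
            (ENNReal.inv_mul_cancel hc.ne' htop).symm
          rw [h1]
          refine mul_le_mul_left ?_ _
          refine le_trans hn.le ?_
          push_cast
          exact le_self_add
      · have hp0 : p x = 0 := by simpa using not_lt.mp hx
        simp only [Set.indicator_apply, Set.mem_setOf_eq, if_neg hx]
        simp [hp0]
    have hmeas : ∀ n : ℕ, Measurable fun x =>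
        min 1 ((((n:ℝ≥0)+1 : ℝ≥0) : ℝ≥0∞) * p x / q x) :=
      fun n => measurable_const.min ((measurable_const.mul hp).div hq)
    have hmono : Monotone fun (n : ℕ) x =>
        min (1:ℝ≥0∞) ((((n:ℝ≥0)+1 : ℝ≥0) : ℝ≥0∞) * p x / q x) := by
      intro n m hnm
      intro x
      refine min_le_min le_rfl (ENNReal.div_le_div_right (mul_le_mul_left ?_ _) _)
      exact_mod_cast Nat.succ_le_succ hnm
    calc Q {x | 0 < p x}
        = ∫⁻ x, Set.indicator {x | 0 < p x} (fun _ => (1:ℝ≥0∞)) x ∂Q := by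
          rw [lintegral_indicator hs]; simp
      _ = ∫⁻ x, ⨆ n : ℕ, min 1 ((((n:ℝ≥0)+1 : ℝ≥0) : ℝ≥0∞) * p x / q x) ∂Q :=
          lintegral_congr_ae heq
      _ = ⨆ n : ℕ, ∫⁻ x, min 1 ((((n:ℝ≥0)+1 : ℝ≥0) : ℝ≥0∞) * p x / q x) ∂Q :=
          lintegral_iSup hmeas hmono
      _ ≤ ⨆ l ∈ Set.Ioi (0 : ℝ≥0), ∫⁻ x, min 1 ((l : ℝ≥0∞) * p x / q x) ∂Q := by
          refine iSup_le fun n => ?_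
          exact le_iSup₂_of_le ((n:ℝ≥0)+1) (Set.mem_Ioi.mpr (by positivity)) le_rfl
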